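/- arXiv:1904.09690 — 6 statements merged into one kernel-verified Lean document; each statement's English description precedes it below -/
import Mathlib

section
/- For any two strings x and y of length n over a metric space, there exists an optimal (minimum-cost) correspondence between x and y whose total length is at most 2n. Equivalently, there is an optimal correspondence in which for each pair of overlapping runs, at most one of the two runs is extended. -/
open scoped BigOperators

variable {α : Type*}

/-- `xb` is the expansion of `x` obtained by replacing the `i`-th letter of `x`
with `ks[i] ≥ 1` consecutive copies of itself (equivalently, by extending runs). -/
def IsExpansionWith (x : List α) (ks : List ℕ) (xb : List α) : Prop :=
  ks.length = x.length ∧ (∀ k ∈ ks, 1 ≤ k) ∧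
    xb = (x.zip ks).flatMap fun p => List.replicate p.2 p.1

/-- `xb` is an expansion of `x` (obtained by extending runs). -/
def IsExpansion (x xb : List α) : Prop := ∃ ks, IsExpansionWith x ks xb

/-- The cost of a correspondence: sum of pointwise distances. -/
def corrCost (d : α → α → ℝ) (xb yb : List α) : ℝ :=
  ((xb.zip yb).map fun p => d p.1 p.2).sum

/-- A correspondence between `x` and `y`: a pair of equal-length expansions. -/
def IsCorrespondence (x y xb yb : List α) : Prop :=
  IsExpansion x xb ∧ IsExpansion y yb ∧ xb.length = yb.length

/-- Dynamic time warping distance: minimum cost of a correspondence. -/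
noncomputable def dtw (d : α → α → ℝ) (x y : List α) : ℝ :=
  sInf {c | ∃ xb yb, IsCorrespondence x y xb yb ∧ c = corrCost d xb yb}

/-- The maximal runs of equal letters of a list. -/
def runsOf [DecidableEq α] (x : List α) : List (List α) := x.splitBy (· == ·)

/-- Number of runs. -/
def numRuns [DecidableEq α] (x : List α) : ℕ := (runsOf x).length

/-- Length of the final run. -/
def lastRunLen [DecidableEq α] (x : List α) : ℕ := ((runsOf x).getLastD []).length

/-- Length of the `i`-th run (0-indexed). -/
def runLen [DecidableEq α] (x : List α) (i : ℕ) : ℕ := ((runsOf x).getD i []).length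

/-- The letter populating the `i`-th run (0-indexed). -/
def runLetter [DecidableEq α] [Inhabited α] (x : List α) (i : ℕ) : α :=
  ((runsOf x).getD i []).headI

/-- The concatenation of the first `k` runs of `x`. -/
def firstRuns [DecidableEq α] (k : ℕ) (x : List α) : List α := ((runsOf x).take k).flatten

/-- The prefix of `y` consisting of its first `ry` runs, up through the `oy`-th
letter of the `ry`-th run (runs are 1-indexed here). -/
def runPrefix [DecidableEq α] (ry oy : ℕ) (y : List α) : List α :=
  firstRuns (ry - 1) y ++ ((runsOf y).getD (ry - 1) []).take oy

/-- The subproblem `SP(x, y, rx, ry, oy)`: the minimum cost of a correspondence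
between the first `rx` runs of `x` and the prefix of `y` ending at the `oy`-th
letter of its `ry`-th run, under the constraint that the final (`ry`-th) run of
the `y`-prefix is not extended; `⊤` if no such correspondence exists. -/
noncomputable def SP [DecidableEq α] (d : α → α → ℝ) (x y : List α) (rx ry oy : ℕ) : EReal :=
  sInf ((fun p : List α × List α => ((corrCost d p.1 p.2 : ℝ) : EReal)) ''
    {p | IsCorrespondence (firstRuns rx x) (runPrefix ry oy y) p.1 p.2 ∧
         (0 < oy → lastRunLen p.2 = oy)})

/-- Generalized edit distance over a metric with null character `nul`:
insertion/deletion of `l` costs `d nul l`, substitution of `l` by `l'` costs `d l l'`. -/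
noncomputable def ged (d : α → α → ℝ) (nul : α) : List α → List α → ℝ
  | [], [] => 0
  | [], b :: ys => d nul b + ged d nul [] ys
  | a :: xs, [] => d nul a + ged d nul xs []
  | a :: xs, b :: ys =>
      min (d a b + ged d nul xs ys)
        (min (d nul a + ged d nul xs (b :: ys)) (d nul b + ged d nul (a :: xs) ys))
  termination_by x y => x.length + y.length

/-- Simple (Hamming/Levenshtein) edit distance: unit-cost insertions, deletions
and substitutions. -/
def edH [DecidableEq α] : List α → List α → ℕ
  | [], ys => ys.length
  | xs, [] => xs.length
  | a :: xs, b :: ys =>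
      min ((if a = b then 0 else 1) + edH xs ys)
        (min (1 + edH xs (b :: ys)) (1 + edH (a :: xs) ys))
  termination_by x y => x.length + y.length

/-- Simple edit distance with only unit-cost insertions and deletions. -/
def edS [DecidableEq α] : List α → List α → ℕ
  | [], ys => ys.length
  | xs, [] => xs.length
  | a :: xs, b :: ys =>
      if a = b then
        min (edS xs ys) (min (1 + edS xs (b :: ys)) (1 + edS (a :: xs) ys))
      else
        min (1 + edS xs (b :: ys)) (1 + edS (a :: xs) ys)
  termination_by x y => x.length + y.length

/-- The padded string `p(x) = ∅ x₁ ∅ x₂ ∅ ⋯ xₙ ∅`. -/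
def pad (nul : α) (x : List α) : List α := nul :: x.flatMap fun a => [a, nul]

/-- The `r`-simplification for edit distance: remove all letters of magnitude at most `r`. -/
noncomputable def sEd [MetricSpace α] (nul : α) (r : ℝ) (x : List α) : List α :=
  x.filter fun l => decide (r < dist nul l)


/-!
Shortening a correspondence never raises its cost: whenever both `x̄` and `ȳ` start with a
repeated letter, dropping the first aligned pair removes a nonnegative term and leaves a
correspondence of the same strings. Iterating, every correspondence is dominated by one in
which each aligned pair advances in `x` or in `y`, hence of length at most `|x| + |y|`. There
are only finitely many such short correspondences, and the cheapest of them is optimal.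
-/

section Expansion

variable {a b : α} {x xb X : List α}

theorem isExpansion_nil_left : IsExpansion [] xb ↔ xb = [] := by
  constructor
  · rintro ⟨ks, -, -, rfl⟩
    simp
  · rintro rfl
    exact ⟨[], rfl, by simp, by simp⟩

theorem isExpansion_cons_left :
    IsExpansion (a :: x) xb ↔ ∃ k X, 1 ≤ k ∧ IsExpansion x X ∧ xb = List.replicate k a ++ X := by
  constructor
  · rintro ⟨_ | ⟨k, ks⟩, hlen, hpos, rfl⟩
    · simp at hlen
    · exact ⟨k, _, hpos k (by simp),
        ⟨ks, by simpa using hlen, fun j hj => hpos j (by simp [hj]), rfl⟩, by simp⟩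
  · rintro ⟨k, X, hk, ⟨ks, hlen, hpos, rfl⟩, rfl⟩
    refine ⟨k :: ks, by simpa using hlen, ?_, by simp⟩
    simpa [hk] using hpos

theorem isExpansion_cons_cons :
    IsExpansion (a :: x) (b :: X) ↔ b = a ∧ (IsExpansion x X ∨ IsExpansion (a :: x) X) := by
  rw [isExpansion_cons_left]
  constructor
  · rintro ⟨_ | _ | k, X', hk, hX', he⟩
    · omega
    · obtain ⟨rfl, rfl⟩ : b = a ∧ X = X' := by simpa using he
      exact ⟨rfl, .inl hX'⟩
    · obtain ⟨rfl, rfl⟩ : b = a ∧ X = List.replicate (k + 1) a ++ X' := by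
        simpa [List.replicate_succ] using he
      exact ⟨rfl, .inr (isExpansion_cons_left.2 ⟨k + 1, X', by omega, hX', rfl⟩)⟩
  · rintro ⟨rfl, hX | hX⟩
    · exact ⟨1, X, le_rfl, hX, rfl⟩
    · obtain ⟨k, X', hk, hX', rfl⟩ := isExpansion_cons_left.1 hX
      exact ⟨k + 1, X', by omega, hX', rfl⟩

theorem IsExpansion.refl (x : List α) : IsExpansion x x := by
  induction x with
  | nil => exact isExpansion_nil_left.2 rfl
  | cons a x ih => exact isExpansion_cons_cons.2 ⟨rfl, .inl ih⟩

theorem IsExpansion.subset (h : IsExpansion x xb) : xb ⊆ x := by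
  induction x generalizing xb with
  | nil => simp [isExpansion_nil_left.1 h]
  | cons a x ih =>
    obtain ⟨k, X, -, hX, rfl⟩ := isExpansion_cons_left.1 h
    exact List.append_subset.2
      ⟨fun c hc => List.eq_of_mem_replicate hc ▸ List.mem_cons_self,
        fun c hc => List.mem_cons_of_mem a (ih hX hc)⟩

end Expansion

theorem List.finite_setOf_length_le_subset (s : List α) (N : ℕ) :
    {l : List α | l.length ≤ N ∧ l ⊆ s}.Finite := by
  have : Finite {a // a ∈ s} := s.finite_toSet.to_subtype
  refine ((List.finite_length_le {a // a ∈ s} N).image (List.map Subtype.val)).subset ?_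
  rintro l ⟨hl, hls⟩
  exact ⟨l.attach.map fun a : {b // b ∈ l} => (⟨a.1, hls a.2⟩ : {b // b ∈ s}),
    by simpa using hl, by simp⟩

theorem finite_setOf_isCorrespondence_length_le (x y : List α) (N : ℕ) :
    {p : List α × List α | IsCorrespondence x y p.1 p.2 ∧ p.1.length ≤ N}.Finite := by
  refine ((List.finite_setOf_length_le_subset x N).prod
    (List.finite_setOf_length_le_subset y N)).subset ?_
  rintro ⟨xb, yb⟩ ⟨⟨hx, hy, hlen⟩, hN⟩
  exact ⟨⟨hN, hx.subset⟩, ⟨hlen ▸ hN, hy.subset⟩⟩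

section Cost

variable (d : α → α → ℝ)

theorem corrCost_cons (a b : α) (X Y : List α) :
    corrCost d (a :: X) (b :: Y) = d a b + corrCost d X Y := by
  simp [corrCost]

theorem IsCorrespondence.exists_length_le_add (hd : ∀ a b, 0 ≤ d a b) {x y xb yb : List α}
    (h : IsCorrespondence x y xb yb) :
    ∃ xb' yb', IsCorrespondence x y xb' yb' ∧
      corrCost d xb' yb' ≤ corrCost d xb yb ∧ xb'.length ≤ x.length + y.length := by
  induction xb generalizing x y yb with
  | nil => exact ⟨[], yb, h, le_rfl, by simp⟩
  | cons a X ih =>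
    obtain ⟨hx, hy, hlen⟩ := h
    obtain ⟨b, Y, rfl⟩ : ∃ b Y, yb = b :: Y := List.exists_cons_of_length_pos (by simp [← hlen])
    obtain _ | ⟨a', x⟩ := x
    · simp [isExpansion_nil_left] at hx
    obtain _ | ⟨b', y⟩ := y
    · simp [isExpansion_nil_left] at hy
    obtain ⟨rfl, hX⟩ := isExpansion_cons_cons.1 hx
    obtain ⟨rfl, hY⟩ := isExpansion_cons_cons.1 hy
    have hXY : X.length = Y.length := by simpa using hlen
    rcases hX with hX | hX <;> rcases hY with hY | hY
    case inr.inr =>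
      obtain ⟨xb', yb', h', hcost, hle⟩ := ih ⟨hX, hY, hXY⟩
      refine ⟨xb', yb', h', ?_, hle⟩
      rw [corrCost_cons]
      linarith [hd a b]
    all_goals
      obtain ⟨X', Y', ⟨hX', hY', hlen'⟩, hcost, hle⟩ := ih ⟨hX, hY, hXY⟩
      refine ⟨a :: X', b :: Y', ⟨isExpansion_cons_cons.2 ⟨rfl, by tauto⟩,
        isExpansion_cons_cons.2 ⟨rfl, by tauto⟩, by simp [hlen']⟩, ?_, ?_⟩
      · rw [corrCost_cons, corrCost_cons]
        linarith
      · simp only [List.length_cons] at hle ⊢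
        omega

theorem exists_corrCost_eq_dtw_of_length_le (hd : ∀ a b, 0 ≤ d a b) {x y xb₀ yb₀ : List α}
    (h₀ : IsCorrespondence x y xb₀ yb₀) :
    ∃ xb yb, IsCorrespondence x y xb yb ∧ corrCost d xb yb = dtw d x y ∧
      xb.length ≤ x.length + y.length := by
  obtain ⟨xb₁, yb₁, h₁, -, hle₁⟩ := h₀.exists_length_le_add d hd
  obtain ⟨⟨xb, yb⟩, ⟨h, hle⟩, hmin⟩ := Set.exists_min_image _
    (fun p : List α × List α => corrCost d p.1 p.2)
    (finite_setOf_isCorrespondence_length_le x y _) ⟨(xb₁, yb₁), h₁, hle₁⟩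
  refine ⟨xb, yb, h, .symm <| IsLeast.csInf_eq ⟨⟨xb, yb, h, rfl⟩, ?_⟩, hle⟩
  rintro _ ⟨xb', yb', h', rfl⟩
  obtain ⟨xb'', yb'', h'', hcost, hle''⟩ := h'.exists_length_le_add d hd
  exact (hmin (xb'', yb'') ⟨h'', hle''⟩).trans hcost

end Cost

/-- For strings of length `n`, there is an optimal (minimum-cost) correspondence
of total length at most `2n`. -/
theorem stmt1 [MetricSpace α] (n : ℕ) (x y : List α)
    (hx : x.length = n) (hy : y.length = n) :
    ∃ xb yb : List α, IsCorrespondence x y xb yb ∧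
      corrCost dist xb yb = dtw dist x y ∧ xb.length ≤ 2 * n := by
  have hxy : IsCorrespondence x y x y := ⟨.refl x, .refl y, hx.trans hy.symm⟩
  obtain ⟨xb, yb, h, hcost, hle⟩ :=
    exists_corrCost_eq_dtw_of_length_le dist (fun _ _ => dist_nonneg) hxy
  exact ⟨xb, yb, h, hcost, by omega⟩
end

section
/- In an optimal correspondence between padded strings p(x) and p(y) over a metric Σ ∪ {∅}, one may assume without loss of generality that the only extended runs are runs of the ∅ character: there exists an optimal correspondence between p(x) and p(y) in which no run of a non-∅ letter is extended. -/
open scoped BigOperators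

variable {α : Type*}

/-!
The key fact is `dtw (p x) (p y) = ged x y`. Every edit script of `x` into `y` is realized by a
correspondence of `p(x)` and `p(y)` extending only null runs: substituted letters are matched
directly, and a deleted or inserted letter is matched with a repeated `∅`. Conversely, reading a
correspondence from the front, its cost dominates `ged` of the remaining suffixes; once the
leading non-null letter `a` of one side has been matched, it may be dropped from the bound, at the
price of one `dist ∅ a` when the other side starts with a non-null letter (triangle inequality).
-/

section Ged

variable (d : α → α → ℝ) (nul : α)

lemma ged_cons_cons_le (a b : α) (x y : List α) :
    ged d nul (a :: x) (b :: y) ≤ d a b + ged d nul x y := by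
  rw [ged.eq_4]
  exact min_le_left _ _

lemma ged_cons_left_le (a : α) (x y : List α) :
    ged d nul (a :: x) y ≤ d nul a + ged d nul x y := by
  cases y with
  | nil => rw [ged.eq_3]
  | cons b y =>
    rw [ged.eq_4]
    exact (min_le_right _ _).trans (min_le_left _ _)

lemma ged_cons_right_le (x : List α) (b : α) (y : List α) :
    ged d nul x (b :: y) ≤ d nul b + ged d nul x y := by
  cases x with
  | nil => rw [ged.eq_2]
  | cons a x =>
    rw [ged.eq_4]
    exact (min_le_right _ _).trans (min_le_right _ _)

lemma ged_comm (hd : ∀ a b, d a b = d b a) (x y : List α) :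
    ged d nul x y = ged d nul y x := by
  induction x, y using ged.induct with
  | case1 => rfl
  | case2 b y ih => rw [ged.eq_2, ged.eq_3, ih]
  | case3 a x ih => rw [ged.eq_3, ged.eq_2, ih]
  | case4 a x b y ih ih_left ih_right =>
    rw [ged.eq_4, ged.eq_4, ih, ih_left, ih_right, hd a b, min_comm (d nul a + _)]

lemma ged_dist_comm [MetricSpace α] (x y : List α) : ged dist nul x y = ged dist nul y x :=
  ged_comm dist nul dist_comm x y

end Ged

lemma pad_nil (nul : α) : pad nul [] = [nul] := rfl

lemma pad_cons (nul a : α) (x : List α) : pad nul (a :: x) = nul :: a :: pad nul x := rfl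

lemma pad_ne_nil (nul : α) (x : List α) : pad nul x ≠ [] := List.cons_ne_nil _ _

lemma eq_pad_of_cons_eq_pad {nul a : α} {X x : List α} (h : a :: X = pad nul x) :
    nul = a ∧ (x = [] ∧ X = [] ∨ ∃ b x', x = b :: x' ∧ X = b :: pad nul x') := by
  cases x with
  | nil => simp_all [pad_nil]
  | cons b x' => simp_all [pad_cons]

lemma corrCost_cons_s4 (d : α → α → ℝ) (u v : α) (xb yb : List α) :
    corrCost d (u :: xb) (v :: yb) = d u v + corrCost d xb yb := by
  simp [corrCost]

lemma corrCost_nonneg [MetricSpace α] (xb yb : List α) : 0 ≤ corrCost dist xb yb :=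
  List.sum_nonneg fun _ hr => by
    obtain ⟨_, -, rfl⟩ := List.mem_map.1 hr
    exact dist_nonneg

lemma corrCost_comm [MetricSpace α] :
    ∀ xb yb : List α, corrCost dist xb yb = corrCost dist yb xb
  | [], _ | _ :: _, [] => by simp [corrCost]
  | u :: xb, v :: yb => by rw [corrCost_cons_s4, corrCost_cons_s4, dist_comm, corrCost_comm xb yb]

section Expansion

variable {X xb : List α} {ks : List ℕ}

lemma IsExpansionWith.cons_one (a : α) (h : IsExpansionWith X ks xb) :
    IsExpansionWith (a :: X) (1 :: ks) (a :: xb) := by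
  obtain ⟨hl, hk, rfl⟩ := h
  refine ⟨by simp [hl], ?_, by simp⟩
  simpa using hk

lemma IsExpansionWith.cons_succ {a : α} {k : ℕ} (h : IsExpansionWith (a :: X) (k :: ks) xb) :
    IsExpansionWith (a :: X) ((k + 1) :: ks) (a :: xb) := by
  obtain ⟨hl, hk, rfl⟩ := h
  refine ⟨by simpa using hl, ?_, by simp [List.replicate_succ]⟩
  simp_all

lemma IsExpansion.eq_nil_iff (h : IsExpansion X xb) : X = [] ↔ xb = [] := by
  obtain ⟨ks, hl, hk, rfl⟩ := h
  cases X with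
  | nil => simp
  | cons a X =>
    cases ks with
    | nil => simp at hl
    | cons k ks =>
      obtain ⟨m, rfl⟩ := Nat.exists_eq_add_of_le' (hk k List.mem_cons_self)
      simp [List.replicate_succ]

lemma IsExpansion.exists_of_cons {u : α} (h : IsExpansion X (u :: xb)) :
    ∃ X', X = u :: X' ∧ (IsExpansion X' xb ∨ IsExpansion (u :: X') xb) := by
  obtain ⟨ks, hl, hk, hf⟩ := h
  obtain _ | ⟨a, X'⟩ := X
  · simp at hf
  obtain _ | ⟨k, ks'⟩ := ks
  · simp at hl
  obtain ⟨m, rfl⟩ := Nat.exists_eq_add_of_le' (hk k List.mem_cons_self)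
  simp only [List.zip_cons_cons, List.flatMap_cons, List.replicate_succ, List.cons_append,
    List.cons.injEq] at hf
  obtain ⟨rfl, rfl⟩ := hf
  refine ⟨X', rfl, ?_⟩
  cases m with
  | zero => exact .inl ⟨ks', by simpa using hl, fun k hk' => hk k (.tail _ hk'), by simp⟩
  | succ m =>
    refine .inr ⟨(m + 1) :: ks', by simpa using hl, ?_, by simp⟩
    simpa using hk

end Expansion

def IsNullExpansion (nul : α) (X xb : List α) : Prop :=
  ∃ ks, IsExpansionWith X ks xb ∧ ∀ p ∈ X.zip ks, p.1 ≠ nul → p.2 = 1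

namespace IsNullExpansion

variable {nul : α} {X xb : List α}

lemma nil : IsNullExpansion nul [] [] := ⟨[], ⟨rfl, by simp, rfl⟩, by simp⟩

lemma cons (a : α) (h : IsNullExpansion nul X xb) : IsNullExpansion nul (a :: X) (a :: xb) := by
  obtain ⟨ks, hks, hnul⟩ := h
  refine ⟨1 :: ks, hks.cons_one a, ?_⟩
  simpa using fun a k h => hnul (a, k) h

lemma cons_nul (h : IsNullExpansion nul (nul :: X) xb) :
    IsNullExpansion nul (nul :: X) (nul :: xb) := by
  obtain ⟨ks, hks, hnul⟩ := h
  obtain _ | ⟨k, ks⟩ := ks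
  · simp [IsExpansionWith] at hks
  refine ⟨(k + 1) :: ks, hks.cons_succ, ?_⟩
  intro p hp hpn
  rw [List.zip_cons_cons, List.mem_cons] at hp
  obtain rfl | hp := hp
  · exact absurd rfl hpn
  · exact hnul p (List.mem_cons_of_mem _ hp) hpn

end IsNullExpansion

section UpperBound

variable [MetricSpace α] (nul : α)

def HasNullCorrespondence (x y : List α) (c : ℝ) : Prop :=
  ∃ xb yb, IsNullExpansion nul (pad nul x) xb ∧ IsNullExpansion nul (pad nul y) yb ∧
    xb.length = yb.length ∧ corrCost dist xb yb ≤ c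

variable {nul}

lemma hasNullCorrespondence_nil : HasNullCorrespondence nul [] [] 0 :=
  ⟨[nul], [nul], .cons _ .nil, .cons _ .nil, rfl, by simp [corrCost]⟩

namespace HasNullCorrespondence

variable {x y : List α} {c : ℝ}

lemma symm (h : HasNullCorrespondence nul x y c) : HasNullCorrespondence nul y x c :=
  let ⟨xb, yb, hxb, hyb, hl, hcost⟩ := h
  ⟨yb, xb, hyb, hxb, hl.symm, corrCost_comm xb yb ▸ hcost⟩

lemma subst (a b : α) (h : HasNullCorrespondence nul x y c) :
    HasNullCorrespondence nul (a :: x) (b :: y) (dist a b + c) := by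
  obtain ⟨xb, yb, hxb, hyb, hl, hcost⟩ := h
  refine ⟨nul :: a :: xb, nul :: b :: yb, (hxb.cons a).cons nul, (hyb.cons b).cons nul,
    by simp [hl], ?_⟩
  simpa [corrCost_cons_s4] using hcost

lemma delete (a : α) (h : HasNullCorrespondence nul x y c) :
    HasNullCorrespondence nul (a :: x) y (dist nul a + c) := by
  obtain ⟨xb, yb, hxb, hyb, hl, hcost⟩ := h
  refine ⟨nul :: a :: xb, nul :: nul :: yb, (hxb.cons a).cons nul, hyb.cons_nul.cons_nul,
    by simp [hl], ?_⟩
  simpa [corrCost_cons_s4, dist_comm a nul] using hcost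

lemma insert (b : α) (h : HasNullCorrespondence nul x y c) :
    HasNullCorrespondence nul x (b :: y) (dist nul b + c) :=
  (h.symm.delete b).symm

end HasNullCorrespondence

theorem hasNullCorrespondence_ged (x y : List α) :
    HasNullCorrespondence nul x y (ged dist nul x y) := by
  induction x, y using ged.induct with
  | case1 => rw [ged.eq_1]; exact hasNullCorrespondence_nil
  | case2 b y ih => rw [ged.eq_2]; exact ih.insert b
  | case3 a x ih => rw [ged.eq_3]; exact ih.delete a
  | case4 a x b y ih ih_left ih_right =>
    rw [ged.eq_4]
    rcases min_choice (dist a b + ged dist nul x y)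
      (min (dist nul a + ged dist nul x (b :: y)) (dist nul b + ged dist nul (a :: x) y))
      with h | h <;> rw [h]
    · exact ih.subst a b
    rcases min_choice (dist nul a + ged dist nul x (b :: y)) (dist nul b + ged dist nul (a :: x) y)
      with h | h <;> rw [h]
    · exact ih_left.delete a
    · exact ih_right.insert b

end UpperBound

section LowerBound

variable [MetricSpace α] (nul : α)

/-- A suffix `a :: pad nul x` arises once the `nul` preceding `a` is used up; the bounds in terms
of `x` alone hold when `a` has already been matched. -/
def PadBounds (X Y : List α) (c : ℝ) : Prop :=
  (∀ x y, X = pad nul x → Y = pad nul y → ged dist nul x y ≤ c) ∧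
  (∀ a x y, X = a :: pad nul x → Y = pad nul y →
    ged dist nul (a :: x) y ≤ c ∧ ged dist nul x y ≤ c) ∧
  (∀ a x b y, X = a :: pad nul x → Y = b :: pad nul y →
    ged dist nul (a :: x) (b :: y) ≤ c ∧ ged dist nul x (b :: y) ≤ c + dist nul a)

variable {nul}

namespace PadBounds

variable {X Y : List α} {c : ℝ}

lemma nil_left (Y : List α) (c : ℝ) : PadBounds nul [] Y c :=
  ⟨fun x _ h _ => absurd h.symm (pad_ne_nil nul x),
    fun _ _ _ h _ => (List.cons_ne_nil _ _ h.symm).elim,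
    fun _ _ _ _ h _ => (List.cons_ne_nil _ _ h.symm).elim⟩

lemma mono (h : PadBounds nul X Y c) {c' : ℝ} (hc : c ≤ c') : PadBounds nul X Y c' := by
  refine ⟨fun x y hX hY => (h.1 x y hX hY).trans hc, fun a x y hX hY => ?_,
    fun a x b y hX hY => ?_⟩
  · exact (h.2.1 a x y hX hY).imp (·.trans hc) (·.trans hc)
  · exact (h.2.2 a x b y hX hY).imp (·.trans hc) (·.trans (by linarith))

lemma cons_of_step (hc : 0 ≤ c) (hXY : X = [] ↔ Y = []) (h : PadBounds nul X Y c)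
    (h' : PadBounds nul Y X c) (a b : α) : PadBounds nul (a :: X) (b :: Y) (dist a b + c) := by
  refine ⟨fun x y hX hY => ?_, fun a' x y hX hY => ?_, fun a' x b' y hX hY => ?_⟩
  · obtain ⟨rfl, ⟨rfl, rfl⟩ | ⟨a', x', rfl, rfl⟩⟩ := eq_pad_of_cons_eq_pad hX <;>
      obtain ⟨rfl, ⟨rfl, rfl⟩ | ⟨b', y', rfl, rfl⟩⟩ := eq_pad_of_cons_eq_pad hY
    · simpa [ged.eq_1] using hc
    · simp at hXY
    · simp at hXY
    · simpa using (h.2.2 a' x' b' y' rfl rfl).1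
  · obtain ⟨rfl, rfl⟩ := List.cons.inj hX
    obtain ⟨rfl, ⟨rfl, rfl⟩ | ⟨b', y', rfl, rfl⟩⟩ := eq_pad_of_cons_eq_pad hY
    · simp [pad_ne_nil] at hXY
    have hfresh := (h'.2.1 b' y' x rfl rfl).1
    rw [ged_dist_comm] at hfresh
    refine ⟨?_, by linarith [dist_nonneg (x := a) (y := nul)]⟩
    linarith [ged_cons_left_le dist nul a x (b' :: y'), dist_comm a nul]
  · obtain ⟨rfl, rfl⟩ := List.cons.inj hX
    obtain ⟨rfl, rfl⟩ := List.cons.inj hY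
    have hxy := h.1 x y rfl rfl
    exact ⟨by linarith [ged_cons_cons_le dist nul a b x y],
      by linarith [ged_cons_right_le dist nul x b y, dist_triangle nul a b]⟩

lemma cons_of_stay_left {a : α} (hY : Y ≠ []) (h : PadBounds nul (a :: X) Y c)
    (h' : PadBounds nul Y (a :: X) c) (b : α) :
    PadBounds nul (a :: X) (b :: Y) (dist a b + c) := by
  refine ⟨fun x y hX hY' => ?_, fun a' x y hX hY' => ?_, fun a' x b' y hX hY' => ?_⟩
  · obtain ⟨rfl, ⟨rfl, rfl⟩ | ⟨b', y', rfl, rfl⟩⟩ := eq_pad_of_cons_eq_pad hY'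
    · exact absurd rfl hY
    linarith [(h'.2.1 b' y' x rfl hX).1, ged_dist_comm nul x (b' :: y'),
      dist_nonneg (x := a) (y := nul)]
  · obtain ⟨rfl, -⟩ := List.cons.inj hX
    obtain ⟨rfl, ⟨rfl, rfl⟩ | ⟨b', y', rfl, rfl⟩⟩ := eq_pad_of_cons_eq_pad hY'
    · exact absurd rfl hY
    obtain ⟨hfresh, hpaid⟩ := h.2.2 a x b' y' hX rfl
    exact ⟨by linarith [dist_nonneg (x := a) (y := nul)], by linarith [dist_comm a nul]⟩
  · obtain ⟨rfl, -⟩ := List.cons.inj hX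
    obtain ⟨rfl, rfl⟩ := List.cons.inj hY'
    have hxy := (h.2.1 a x y hX rfl).2
    exact ⟨by linarith [ged_cons_cons_le dist nul a b x y],
      by linarith [ged_cons_right_le dist nul x b y, dist_triangle nul a b]⟩

lemma cons_of_stay_right {b : α} (hX : X ≠ []) (h : PadBounds nul X (b :: Y) c)
    (h' : PadBounds nul (b :: Y) X c) (a : α) :
    PadBounds nul (a :: X) (b :: Y) (dist a b + c) := by
  refine ⟨fun x y hX' hY => ?_, fun a' x y hX' hY => ?_, fun a' x b' y hX' hY => ?_⟩
  · obtain ⟨rfl, ⟨rfl, rfl⟩ | ⟨a', x', rfl, rfl⟩⟩ := eq_pad_of_cons_eq_pad hX'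
    · exact absurd rfl hX
    linarith [(h.2.1 a' x' y rfl hY).1, dist_nonneg (x := nul) (y := b)]
  · obtain ⟨rfl, rfl⟩ := List.cons.inj hX'
    obtain ⟨rfl, -⟩ := eq_pad_of_cons_eq_pad hY
    have hxy := h.1 x y rfl hY
    exact ⟨by linarith [ged_cons_left_le dist nul a x y, dist_comm a nul],
      by linarith [dist_nonneg (x := a) (y := nul)]⟩
  · obtain ⟨rfl, rfl⟩ := List.cons.inj hX'
    obtain ⟨rfl, -⟩ := List.cons.inj hY
    obtain ⟨hfresh, hpaid⟩ := h'.2.1 b y x hY rfl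
    rw [ged_dist_comm] at hfresh hpaid
    exact ⟨by linarith [ged_cons_cons_le dist nul a b x y],
      by linarith [dist_nonneg (x := nul) (y := a), dist_nonneg (x := a) (y := b)]⟩

end PadBounds

theorem padBounds_corrCost {X Y xb yb : List α} (hX : IsExpansion X xb) (hY : IsExpansion Y yb)
    (hl : xb.length = yb.length) :
    PadBounds nul X Y (corrCost dist xb yb) ∧ PadBounds nul Y X (corrCost dist xb yb) := by
  induction xb generalizing X Y yb with
  | nil =>
    obtain rfl := hX.eq_nil_iff.2 rfl
    obtain rfl := hY.eq_nil_iff.2 (List.length_eq_zero_iff.1 hl.symm)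
    exact ⟨.nil_left _ _, .nil_left _ _⟩
  | cons u xb ih =>
    obtain _ | ⟨v, yb⟩ := yb
    · simp at hl
    have hl' : xb.length = yb.length := by simpa using hl
    have hc := corrCost_nonneg xb yb
    rw [corrCost_cons_s4]
    set c := corrCost dist xb yb
    obtain ⟨X', rfl, hX'⟩ := hX.exists_of_cons
    obtain ⟨Y', rfl, hY'⟩ := hY.exists_of_cons
    have hne : xb = [] ↔ yb = [] := by
      rw [← List.length_eq_zero_iff, hl', List.length_eq_zero_iff]
    rcases hX' with hX' | hX' <;> rcases hY' with hY' | hY' <;> obtain ⟨h, h'⟩ := ih hX' hY' hl'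
    · have hXY : X' = [] ↔ Y' = [] := by rw [hX'.eq_nil_iff, hY'.eq_nil_iff, hne]
      exact ⟨h.cons_of_step hc hXY h' u v, dist_comm v u ▸ h'.cons_of_step hc hXY.symm h v u⟩
    · have hX0 : X' ≠ [] := by simp [hX'.eq_nil_iff, hne, ← hY'.eq_nil_iff]
      exact ⟨h.cons_of_stay_right hX0 h' u, dist_comm v u ▸ h'.cons_of_stay_left hX0 h u⟩
    · have hY0 : Y' ≠ [] := by simp [hY'.eq_nil_iff, ← hne, ← hX'.eq_nil_iff]
      exact ⟨h.cons_of_stay_left hY0 h' v, dist_comm v u ▸ h'.cons_of_stay_right hY0 h v⟩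
    · exact ⟨h.mono (by linarith [dist_nonneg (x := u) (y := v)]),
        h'.mono (by linarith [dist_nonneg (x := u) (y := v)])⟩

end LowerBound

theorem dtw_eq_corrCost_of_forall_le {d : α → α → ℝ} {X Y xb yb : List α}
    (h : IsCorrespondence X Y xb yb)
    (hle : ∀ xb' yb', IsCorrespondence X Y xb' yb' → corrCost d xb yb ≤ corrCost d xb' yb') :
    dtw d X Y = corrCost d xb yb :=
  IsLeast.csInf_eq ⟨⟨xb, yb, h, rfl⟩, by
    rintro _ ⟨xb', yb', h', rfl⟩
    exact hle xb' yb' h'⟩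

theorem ged_le_corrCost_of_isCorrespondence [MetricSpace α] {nul : α} {x y xb yb : List α}
    (h : IsCorrespondence (pad nul x) (pad nul y) xb yb) :
    ged dist nul x y ≤ corrCost dist xb yb :=
  (padBounds_corrCost h.1 h.2.1 h.2.2).1.1 x y rfl rfl

theorem stmt4_general [MetricSpace α] (nul : α) (x y : List α) :
    ∃ (xb yb : List α) (ksx ksy : List ℕ),
      IsExpansionWith (pad nul x) ksx xb ∧ IsExpansionWith (pad nul y) ksy yb ∧
      xb.length = yb.length ∧
      corrCost dist xb yb = dtw dist (pad nul x) (pad nul y) ∧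
      (∀ p ∈ (pad nul x).zip ksx, p.1 ≠ nul → p.2 = 1) ∧
      (∀ p ∈ (pad nul y).zip ksy, p.1 ≠ nul → p.2 = 1) := by
  obtain ⟨xb, yb, ⟨ksx, hxb, hksx⟩, ⟨ksy, hyb, hksy⟩, hl, hcost⟩ :=
    hasNullCorrespondence_ged (nul := nul) x y
  refine ⟨xb, yb, ksx, ksy, hxb, hyb, hl, ?_, hksx, hksy⟩
  have hcorr : IsCorrespondence (pad nul x) (pad nul y) xb yb := ⟨⟨ksx, hxb⟩, ⟨ksy, hyb⟩, hl⟩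
  exact (dtw_eq_corrCost_of_forall_le hcorr fun _ _ h =>
    hcost.trans (ged_le_corrCost_of_isCorrespondence h)).symm

/-- There is an optimal correspondence between `p(x)` and `p(y)` in which no run
of a non-null letter is extended (every non-null letter gets multiplicity 1). -/
theorem stmt4 [MetricSpace α] (nul : α) (n : ℕ) (x y : List α)
    (hx : x.length = n) (hy : y.length = n)
    (hxn : ∀ l ∈ x, l ≠ nul) (hyn : ∀ l ∈ y, l ≠ nul) :
    ∃ (xb yb : List α) (ksx ksy : List ℕ),
      IsExpansionWith (pad nul x) ksx xb ∧ IsExpansionWith (pad nul y) ksy yb ∧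
      xb.length = yb.length ∧
      corrCost dist xb yb = dtw dist (pad nul x) (pad nul y) ∧
      (∀ p ∈ (pad nul x).zip ksx, p.1 ≠ nul → p.2 = 1) ∧
      (∀ p ∈ (pad nul y).zip ksy, p.1 ≠ nul → p.2 = 1) :=
  stmt4_general nul x y
end

section
/- Let Σ be a set with the generalized Hamming metric (d(a,b) = 1 if a ≠ b, else 0) together with a null character ∅. For x, y ∈ Σⁿ, let p(x) = ∅x₁∅x₂∅⋯xₙ∅. Then ed_S(p(x), p(y)) = 2·ed(x, y), where ed_S is edit distance allowing only unit-cost insertions and deletions, and ed is edit distance allowing unit-cost insertions, deletions, and substitutions. -/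
open scoped BigOperators

variable {α : Type*}

section Aux
variable [DecidableEq α]

lemma my_edS_nil_left (ys : List α) : edS ([]:List α) ys = ys.length := by rw [edS]
lemma my_edS_nil_right (xs : List α) : edS xs ([]:List α) = xs.length := by
  cases xs <;> simp [edS]
lemma my_edS_cons_cons (a b : α) (xs ys : List α) : edS (a::xs) (b::ys) =
    if a = b then min (edS xs ys) (min (1 + edS xs (b :: ys)) (1 + edS (a :: xs) ys))
    else min (1 + edS xs (b :: ys)) (1 + edS (a :: xs) ys) := by rw [edS]

lemma my_edH_nil_left (ys : List α) : edH ([]:List α) ys = ys.length := by rw [edH]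
lemma my_edH_nil_right (xs : List α) : edH xs ([]:List α) = xs.length := by
  cases xs <;> simp [edH]
lemma my_edH_cons_cons (a b : α) (xs ys : List α) : edH (a::xs) (b::ys) =
    min ((if a = b then 0 else 1) + edH xs ys)
      (min (1 + edH xs (b :: ys)) (1 + edH (a :: xs) ys)) := by rw [edH]

-- easy directions
lemma my_edS_le_ins (xs : List α) (b : α) (ys : List α) : edS xs (b::ys) ≤ 1 + edS xs ys := by
  cases xs with
  | nil => simp [my_edS_nil_left, my_edS_nil_right]
  | cons a xs => rw [my_edS_cons_cons]; split <;> omega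
lemma my_edS_le_del (a : α) (xs ys : List α) : edS (a::xs) ys ≤ 1 + edS xs ys := by
  cases ys with
  | nil => simp [my_edS_nil_right]
  | cons b ys => rw [my_edS_cons_cons]; split <;> omega
lemma my_edH_le_ins (xs : List α) (b : α) (ys : List α) : edH xs (b::ys) ≤ 1 + edH xs ys := by
  cases xs with
  | nil => simp [my_edH_nil_left]
  | cons a xs => rw [my_edH_cons_cons]; omega
lemma my_edH_le_del (a : α) (xs ys : List α) : edH (a::xs) ys ≤ 1 + edH xs ys := by
  cases ys with
  | nil => simp [my_edH_nil_right]
  | cons b ys => rw [my_edH_cons_cons]; omega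

-- reverse directions
lemma my_edS_del_le (c : α) (ys : List α) : ∀ xs : List α, edS xs ys ≤ 1 + edS (c::xs) ys := by
  induction ys with
  | nil => intro xs; simp [my_edS_nil_right]; omega
  | cons b vs ih =>
    intro u
    rw [my_edS_cons_cons c b u vs]
    have h1 := my_edS_le_ins u b vs
    have h2 := ih u
    split <;> omega
lemma my_edS_ins_le (c : α) (xs : List α) : ∀ ys : List α, edS xs ys ≤ 1 + edS xs (c::ys) := by
  induction xs with
  | nil => intro ys; simp [my_edS_nil_left]; omega
  | cons a us ih =>
    intro v
    rw [my_edS_cons_cons a c us v]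
    have h1 := my_edS_le_del a us v
    have h2 := ih v
    split <;> omega
lemma my_edH_del_le (c : α) (ys : List α) : ∀ xs : List α, edH xs ys ≤ 1 + edH (c::xs) ys := by
  induction ys with
  | nil => intro xs; simp [my_edH_nil_right]; omega
  | cons b vs ih =>
    intro u
    rw [my_edH_cons_cons c b u vs]
    have h1 := my_edH_le_ins u b vs
    have h2 := ih u
    split <;> omega
lemma my_edH_ins_le (c : α) (xs : List α) : ∀ ys : List α, edH xs ys ≤ 1 + edH xs (c::ys) := by
  induction xs with
  | nil => intro ys; simp [my_edH_nil_left]; omega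
  | cons a us ih =>
    intro v
    rw [my_edH_cons_cons a c us v]
    have h1 := my_edH_le_del a us v
    have h2 := ih v
    split <;> omega

lemma my_edS_cons_same (c : α) (xs ys : List α) : edS (c::xs) (c::ys) = edS xs ys := by
  rw [my_edS_cons_cons]
  have h1 := my_edS_ins_le c xs ys
  have h2 := my_edS_del_le c ys xs
  rw [if_pos rfl]
  omega
lemma my_edH_cons_same (c : α) (xs ys : List α) : edH (c::xs) (c::ys) = edH xs ys := by
  rw [my_edH_cons_cons]
  have h1 := my_edH_ins_le c xs ys
  have h2 := my_edH_del_le c ys xs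
  rw [if_pos rfl]
  omega

lemma my_pad_nil (nul : α) : pad nul ([]:List α) = [nul] := rfl
lemma my_pad_cons (nul a : α) (l : List α) : pad nul (a::l) = nul :: a :: pad nul l := by
  simp [pad]
lemma my_pad_length (nul : α) (l : List α) : (pad nul l).length = 2 * l.length + 1 := by
  induction l with
  | nil => rfl
  | cons a l ih => rw [my_pad_cons]; simp at ih ⊢; omega

lemma my_edS_nul_pad (nul : α) (l : List α) : edS [nul] (pad nul l) = 2 * l.length := by
  cases l with
  | nil => rw [my_pad_nil, my_edS_cons_same]; simp [my_edS_nil_left]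
  | cons b ls =>
    rw [my_pad_cons, my_edS_cons_same, my_edS_nil_left]
    simp [my_pad_length]; omega
lemma my_edS_pad_nul (nul : α) (l : List α) : edS (pad nul l) [nul] = 2 * l.length := by
  cases l with
  | nil => rw [my_pad_nil, my_edS_cons_same]; simp [my_edS_nil_left]
  | cons b ls =>
    rw [my_pad_cons, my_edS_cons_same, my_edS_nil_right]
    simp [my_pad_length]; omega

end Aux

lemma my_main [DecidableEq α] : ∀ n : ℕ,
    (∀ x y : List α, x.length + y.length = n →
       edS (pad (none : Option α) (x.map some)) (pad none (y.map some)) = 2 * edH x y) ∧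
    (∀ (a : α) (x y : List α), x.length + y.length = n →
       edS (some a :: pad (none : Option α) (x.map some)) (pad none (y.map some))
          = 2 * min (edH (a::x) y) (edH x y) + 1 ∧
       edS (pad (none : Option α) (x.map some)) (some a :: pad none (y.map some))
          = 2 * min (edH x (a::y)) (edH x y) + 1) := by
  intro n
  induction n using Nat.strong_induction_on with
  | _ n ih =>
  have hA : ∀ x y : List α, x.length + y.length = n →
      edS (pad (none : Option α) (x.map some)) (pad none (y.map some)) = 2 * edH x y := by
    intro x y hn
    cases x with
    | nil =>
      rw [List.map_nil, my_pad_nil, my_edS_nul_pad, my_edH_nil_left]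
      simp
    | cons a xs =>
      cases y with
      | nil =>
        rw [List.map_nil (f := (some : α → Option α)), my_pad_nil, my_edS_pad_nul,
          my_edH_nil_right]
        simp
      | cons b ys =>
        have hr : xs.length + ys.length < n := by simp at hn; omega
        rw [List.map_cons, List.map_cons, my_pad_cons, my_pad_cons, my_edS_cons_same,
          my_edH_cons_cons]
        by_cases hab : a = b
        · subst hab
          rw [my_edS_cons_same, (ih _ hr).1 xs ys rfl, if_pos rfl]
          have h1 := my_edH_ins_le a xs ys
          have h2 := my_edH_del_le a ys xs
          omega
        · have hne : (some a : Option α) ≠ some b := by simpa using hab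
          rw [my_edS_cons_cons, if_neg hne, if_neg hab]
          have hC := ((ih _ hr).2 a xs ys rfl).1
          have hC' := ((ih _ hr).2 b xs ys rfl).2
          rw [hC, hC']
          omega
  refine ⟨hA, ?_⟩
  intro a x y hn
  have hne : (some a : Option α) ≠ none := by simp
  have hne' : (none : Option α) ≠ some a := by simp
  constructor
  · cases y with
    | nil =>
      rw [List.map_nil (f := (some : α → Option α)), my_pad_nil, my_edS_cons_cons, if_neg hne,
        my_edS_pad_nul, my_edS_nil_right, my_edH_nil_right, my_edH_nil_right]
      simp [my_pad_length]
      omega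
    | cons b ys =>
      have hr : x.length + ys.length < n := by simp at hn; omega
      rw [List.map_cons, my_pad_cons, my_edS_cons_cons, if_neg hne]
      have h1 : edS (pad (none : Option α) (x.map some))
          (none :: some b :: pad none (ys.map some)) = 2 * edH x (b :: ys) := by
        rw [← my_pad_cons, ← List.map_cons]
        exact hA x (b :: ys) hn
      rw [h1]
      by_cases hab : a = b
      · subst hab
        rw [my_edS_cons_same, (ih _ hr).1 x ys rfl, my_edH_cons_same]
        have h2 := my_edH_ins_le a x ys
        omega
      · have hne2 : (some a : Option α) ≠ some b := by simpa using hab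
        rw [my_edS_cons_cons, if_neg hne2]
        have hC' := ((ih _ hr).2 b x ys rfl).2
        have hC := ((ih _ hr).2 a x ys rfl).1
        rw [hC, hC', my_edH_cons_cons, if_neg hab]
        omega
  · cases x with
    | nil =>
      rw [List.map_nil (f := (some : α → Option α)), my_pad_nil, my_edS_cons_cons, if_neg hne',
        my_edS_nul_pad, my_edS_nil_left, my_edH_nil_left, my_edH_nil_left]
      simp [my_pad_length]
      omega
    | cons b xs =>
      have hr : xs.length + y.length < n := by simp at hn; omega
      rw [List.map_cons, my_pad_cons, my_edS_cons_cons, if_neg hne']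
      have h1 : edS (none :: some b :: pad (none : Option α) (xs.map some))
          (pad none (y.map some)) = 2 * edH (b :: xs) y := by
        rw [← my_pad_cons, ← List.map_cons]
        exact hA (b :: xs) y hn
      rw [h1]
      by_cases hab : b = a
      · subst hab
        rw [my_edS_cons_same, (ih _ hr).1 xs y rfl, my_edH_cons_same]
        have h2 := my_edH_del_le b y xs
        omega
      · have hne2 : (some b : Option α) ≠ some a := by simpa using hab
        rw [my_edS_cons_cons, if_neg hne2]
        have hC := ((ih _ hr).2 b xs y rfl).1
        have hC' := ((ih _ hr).2 a xs y rfl).2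
        rw [hC, hC', my_edH_cons_cons, if_neg hab]
        omega

/-- Over generalized Hamming space with an added null character,
`ed_S(p(x), p(y)) = 2 · ed(x, y)`. -/
theorem stmt5 [DecidableEq α] (n : ℕ) (x y : List α)
    (hx : x.length = n) (hy : y.length = n) :
    edS (pad (none : Option α) (x.map some)) (pad none (y.map some)) = 2 * edH x y :=
  (my_main (x.length + y.length)).1 x y rfl
end

section
/- For any letter l and its r-simplification s_r(l) in a well-separated tree metric (the highest ancestor of l reachable using only edges of weight at most r/4), the distance d(l, s_r(l)) ≤ r/4, and for any two letters l₁, l₂ with d(l₁, l₂) ≤ r/4, s_r(l₁) = s_r(l₂). -/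
open scoped BigOperators

variable {α : Type*}

/-- A well-separated tree metric: a rooted edge-weighted tree (given by a parent
function) over the alphabet `σ`, with positive edge weights that are
nonincreasing along every root-to-leaf path. `weight v` is the weight of the
edge from `v` to its parent. -/
structure WSTree (σ : Type*) where
  root : σ
  parent : σ → σ
  weight : σ → ℝ
  parent_root : parent root = root
  weight_pos : ∀ v, v ≠ root → 0 < weight v
  weight_mono : ∀ v, v ≠ root → parent v ≠ root → weight v ≤ weight (parent v)
  to_root : ∀ v, ∃ n, parent^[n] v = root

namespace WSTree

variable {σ : Type*}

/-- The edges (identified by their lower endpoint) on the path from `u` to the root. -/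
def ancEdges (T : WSTree σ) (u : σ) : Set σ :=
  {w | w ≠ T.root ∧ ∃ k, T.parent^[k] u = w}

/-- The tree-metric distance: the maximum weight of an edge on the (unique simple)
path from `u` to `v` (the edges of which form the symmetric difference of the
two root-paths), and `0` if `u = v`. -/
noncomputable def dist (T : WSTree σ) (u v : σ) : ℝ :=
  sSup (T.weight '' (symmDiff (T.ancEdges u) (T.ancEdges v)))

/-- `a` is the `r`-simplification of the letter `l`: the highest ancestor of `l`
reachable from `l` using only edges of weight at most `r / 4`. -/
def IsSimp (T : WSTree σ) (r : ℝ) (l a : σ) : Prop :=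
  (∃ k, T.parent^[k] l = a ∧ ∀ j < k, T.weight (T.parent^[j] l) ≤ r / 4) ∧
    (a = T.root ∨ r / 4 < T.weight a)

end WSTree

namespace WSTreeAux

open WSTree

variable {σ : Type*}

lemma iterate_parent_root (T : WSTree σ) (n : ℕ) : T.parent^[n] T.root = T.root := by
  induction n with
  | zero => rfl
  | succ n ih => rw [Function.iterate_succ_apply', ih, T.parent_root]

lemma eq_of_mutual_anc (T : WSTree σ) {u v : σ} {s t : ℕ}
    (hs : T.parent^[s] u = v) (ht : T.parent^[t] v = u) : u = v := by
  have hst : T.parent^[t + s] u = u := by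
    rw [Function.iterate_add_apply, hs, ht]
  rcases Nat.eq_zero_or_pos (t + s) with h | h
  · have hs0 : s = 0 := by omega
    subst hs0; exact hs
  · obtain ⟨n, hn⟩ := T.to_root u
    have hq : ∀ q, T.parent^[(t + s) * q] u = u := by
      intro q
      induction q with
      | zero => rfl
      | succ q ih =>
          rw [Nat.mul_succ, Function.iterate_add_apply, hst, ih]
    have hle : n ≤ (t + s) * n := Nat.le_mul_of_pos_left n h
    have huroot : u = T.root := by
      have h1 : T.parent^[(t + s) * n] u = u := hq n
      have h2 : T.parent^[(t + s) * n] u = T.root := by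
        rw [show (t + s) * n = ((t + s) * n - n) + n by omega,
          Function.iterate_add_apply, hn, iterate_parent_root]
      rw [← h1, h2]
    rw [huroot] at hs ⊢
    rw [← hs, iterate_parent_root]

lemma simp_unique_aux (T : WSTree σ) {r : ℝ} {l a a' : σ} {k k' : ℕ} (hkk : k ≤ k')
    (hk : T.parent^[k] l = a) (hstop : a = T.root ∨ r / 4 < T.weight a)
    (hk' : T.parent^[k'] l = a') (hw' : ∀ j < k', T.weight (T.parent^[j] l) ≤ r / 4) :
    a = a' := by
  rcases eq_or_lt_of_le hkk with he | hlt
  · rw [← hk, ← hk', he]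
  · rcases hstop with hroot | hgt
    · rw [← hk', show k' = (k' - k) + k by omega, Function.iterate_add_apply, hk, hroot,
        iterate_parent_root]
    · have := hw' k hlt
      rw [hk] at this
      linarith

lemma simp_unique (T : WSTree σ) {r : ℝ} {l a a' : σ}
    (h : T.IsSimp r l a) (h' : T.IsSimp r l a') : a = a' := by
  obtain ⟨⟨k, hk, hw⟩, hstop⟩ := h
  obtain ⟨⟨k', hk', hw'⟩, hstop'⟩ := h'
  rcases le_total k k' with hkk | hkk
  · exact simp_unique_aux T hkk hk hstop hk' hw'
  · exact (simp_unique_aux T hkk hk' hstop' hk hw).symm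

lemma simp_shift (T : WSTree σ) {r : ℝ} {l c a : σ} {m : ℕ}
    (hc : T.parent^[m] l = c) (hwc : ∀ j < m, T.weight (T.parent^[j] l) ≤ r / 4)
    (h : T.IsSimp r l a) : T.IsSimp r c a := by
  obtain ⟨⟨k, hk, hw⟩, hstop⟩ := h
  rcases le_or_gt m k with hmk | hkm
  · refine ⟨⟨k - m, ?_, ?_⟩, hstop⟩
    · rw [← hc, ← Function.iterate_add_apply, Nat.sub_add_cancel hmk, hk]
    · intro j hj
      have hrw : T.parent^[j] c = T.parent^[j + m] l := by
        rw [← hc, Function.iterate_add_apply]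
      rw [hrw]
      exact hw _ (by omega)
  · have haw : T.weight a ≤ r / 4 := by
      rw [← hk]; exact hwc k hkm
    have haroot : a = T.root := by
      rcases hstop with h | h
      · exact h
      · linarith
    have hcroot : c = T.root := by
      rw [← hc, show m = (m - k) + k by omega, Function.iterate_add_apply, hk, haroot,
        iterate_parent_root]
    refine ⟨⟨0, by simp [hcroot, haroot], by simp⟩, Or.inl haroot⟩

lemma dist_le_of_simp (T : WSTree σ) {r : ℝ} (hr : 1 ≤ r) {l a : σ}
    (h : T.IsSimp r l a) : T.dist l a ≤ r / 4 := by
  obtain ⟨⟨k, hk, hw⟩, _⟩ := h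
  apply Real.sSup_le
  · rintro x ⟨w, hwmem, rfl⟩
    rw [Set.mem_symmDiff] at hwmem
    rcases hwmem with ⟨⟨hwroot, m, hm⟩, hnotin⟩ | ⟨⟨hwroot, m, hm⟩, hnotin⟩
    · rcases lt_or_ge m k with hmk | hkm
      · rw [← hm]; exact hw m hmk
      · exact absurd ⟨hwroot, m - k, by
          rw [← hk, ← Function.iterate_add_apply, Nat.sub_add_cancel hkm, hm]⟩ hnotin
    · exact absurd ⟨hwroot, m + k, by rw [Function.iterate_add_apply, hk, hm]⟩ hnotin
  · linarith

lemma weight_le_dist (T : WSTree σ) [Fintype σ] {u v w : σ}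
    (hw : w ∈ symmDiff (T.ancEdges u) (T.ancEdges v)) : T.weight w ≤ T.dist u v :=
  le_csSup ((Set.toFinite _).image _).bddAbove ⟨w, hw, rfl⟩

lemma meet (T : WSTree σ) [Fintype σ] {r : ℝ} {l₁ l₂ : σ} (hd : T.dist l₁ l₂ ≤ r / 4) :
    ∃ c m₁ m₂, T.parent^[m₁] l₁ = c ∧ T.parent^[m₂] l₂ = c ∧
      (∀ j < m₁, T.weight (T.parent^[j] l₁) ≤ r / 4) ∧
      (∀ j < m₂, T.weight (T.parent^[j] l₂) ≤ r / 4) := by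
  classical
  obtain ⟨n₁, hn₁⟩ := T.to_root l₁
  obtain ⟨n₂, hn₂⟩ := T.to_root l₂
  have hP₁ : ∃ m, ∃ i, T.parent^[m] l₁ = T.parent^[i] l₂ := ⟨n₁, n₂, by rw [hn₁, hn₂]⟩
  have hP₂ : ∃ m, ∃ i, T.parent^[m] l₂ = T.parent^[i] l₁ := ⟨n₂, n₁, by rw [hn₁, hn₂]⟩
  set m₁ := Nat.find hP₁ with hm₁def
  set m₂ := Nat.find hP₂ with hm₂def
  obtain ⟨i₂, hi₂⟩ := Nat.find_spec hP₁
  obtain ⟨i₁, hi₁⟩ := Nat.find_spec hP₂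
  -- minimality facts
  have hmin₁ : ∀ j < m₁, ¬ ∃ i, T.parent^[j] l₁ = T.parent^[i] l₂ := fun j hj =>
    Nat.find_min hP₁ hj
  have hmin₂ : ∀ j < m₂, ¬ ∃ i, T.parent^[j] l₂ = T.parent^[i] l₁ := fun j hj =>
    Nat.find_min hP₂ hj
  set c₁ := T.parent^[m₁] l₁ with hc₁def
  set c₂ := T.parent^[m₂] l₂ with hc₂def
  -- m₂ ≤ i₂ and m₁ ≤ i₁ by minimality
  have hm₂i₂ : m₂ ≤ i₂ := by
    by_contra h
    exact hmin₂ i₂ (by omega) ⟨m₁, hi₂.symm⟩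
  have hm₁i₁ : m₁ ≤ i₁ := by
    by_contra h
    exact hmin₁ i₁ (by omega) ⟨m₂, hi₁.symm⟩
  have hs : T.parent^[i₂ - m₂] c₂ = c₁ := by
    rw [hc₂def, ← Function.iterate_add_apply, Nat.sub_add_cancel hm₂i₂, ← hi₂]
  have ht : T.parent^[i₁ - m₁] c₁ = c₂ := by
    rw [hc₁def, ← Function.iterate_add_apply, Nat.sub_add_cancel hm₁i₁, ← hi₁]
  have hcc : c₂ = c₁ := eq_of_mutual_anc T hs ht
  refine ⟨c₁, m₁, m₂, rfl, hcc, ?_, ?_⟩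
  · intro j hj
    have hmem : T.parent^[j] l₁ ∈ symmDiff (T.ancEdges l₁) (T.ancEdges l₂) := by
      rw [Set.mem_symmDiff]
      left
      refine ⟨⟨?_, j, rfl⟩, ?_⟩
      · intro hroot
        exact hmin₁ j hj ⟨n₂, by rw [hroot, hn₂]⟩
      · rintro ⟨-, i, hi⟩
        exact hmin₁ j hj ⟨i, hi.symm⟩
    exact le_trans (weight_le_dist T hmem) hd
  · intro j hj
    have hmem : T.parent^[j] l₂ ∈ symmDiff (T.ancEdges l₁) (T.ancEdges l₂) := by
      rw [Set.mem_symmDiff]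
      right
      refine ⟨⟨?_, j, rfl⟩, ?_⟩
      · intro hroot
        exact hmin₂ j hj ⟨n₁, by rw [hroot, hn₁]⟩
      · rintro ⟨-, i, hi⟩
        exact hmin₂ j hj ⟨i, hi.symm⟩
    exact le_trans (weight_le_dist T hmem) hd

end WSTreeAux

/-- `d(l, s_r(l)) ≤ r/4`, and any two letters at distance at most `r/4` have the
same `r`-simplification. -/
theorem stmt11 {σ : Type*} [Fintype σ] (T : WSTree σ) (r : ℝ) (hr : 1 ≤ r) :
    (∀ l a, T.IsSimp r l a → T.dist l a ≤ r / 4) ∧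
    (∀ l₁ l₂ a₁ a₂, T.IsSimp r l₁ a₁ → T.IsSimp r l₂ a₂ →
      T.dist l₁ l₂ ≤ r / 4 → a₁ = a₂) := by
  constructor
  · exact fun l a h => WSTreeAux.dist_le_of_simp T hr h
  · intro l₁ l₂ a₁ a₂ h₁ h₂ hd
    obtain ⟨c, m₁, m₂, hc₁, hc₂, hw₁, hw₂⟩ := WSTreeAux.meet T hd
    exact WSTreeAux.simp_unique T (WSTreeAux.simp_shift T hc₁ hw₁ h₁)
      (WSTreeAux.simp_shift T hc₂ hw₂ h₂)
end

section
/- Let (Σ ∪ {∅}, d) be a metric space, let |l| = d(∅, l), and for r ≥ 1 let s_r(x) delete from x all letters of magnitude at most r. Then for any x, y ∈ Σⁿ, ed(x, y) < ed(s_r(x), s_r(y)) + 4rn. In particular, if r ≤ 2R, then ed(x, y) ≤ ed(s_r(x), s_r(y)) + 4Rn, so ed(x, y) > 5nR implies ed(s_r(x), s_r(y)) > nR. -/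
open scoped BigOperators

variable {α : Type*}

private lemma min3_le {A B C A' B' C' c : ℝ} (h1 : A ≤ A' + c) (h2 : B ≤ B' + c)
    (h3 : C ≤ C' + c) : min A (min B C) ≤ min A' (min B' C') + c := by
  rcases le_total A' (min B' C') with h | h
  · rw [min_eq_left h]; exact (min_le_left _ _).trans h1
  · rw [min_eq_right h]
    rcases le_total B' C' with h' | h'
    · rw [min_eq_left h']
      exact ((min_le_right _ _).trans (min_le_left _ _)).trans h2
    · rw [min_eq_right h']
      exact ((min_le_right _ _).trans (min_le_right _ _)).trans h3

private lemma ged_symm (d : α → α → ℝ) (nul : α) (hd : ∀ a b, d a b = d b a) :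
    ∀ x y : List α, ged d nul x y = ged d nul y x
  | [], [] => rfl
  | [], b :: ys => by
      have := ged_symm d nul hd [] ys
      simp [ged, this]
  | a :: xs, [] => by
      have := ged_symm d nul hd xs []
      simp [ged, this]
  | a :: xs, b :: ys => by
      have h1 := ged_symm d nul hd xs ys
      have h2 := ged_symm d nul hd xs (b :: ys)
      have h3 := ged_symm d nul hd (a :: xs) ys
      simp only [ged]
      rw [h1, h2, h3, hd a b, min_comm (d nul a + _) (d nul b + _)]
  termination_by x y => x.length + y.length

private lemma ged_filter_left (d : α → α → ℝ) (nul : α) (p : α → Bool) :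
    ∀ x y : List α, ged d nul x y ≤ ged d nul (x.filter p) y +
      ((x.filter fun a => !p a).map (d nul)).sum
  | [], y => by simp
  | a :: xs, [] => by
      have ih := ged_filter_left d nul p xs []
      by_cases hp : p a
      · simp only [List.filter_cons, hp, if_pos, Bool.not_true, if_neg, ged,
          Bool.false_eq_true, not_false_eq_true]
        linarith
      · simp only [List.filter_cons, hp, Bool.not_false, if_pos, if_neg,
          Bool.false_eq_true, not_false_eq_true, List.map_cons, List.sum_cons, ged]
        linarith
  | a :: xs, b :: ys => by
      have h1 := ged_filter_left d nul p xs ys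
      have h2 := ged_filter_left d nul p xs (b :: ys)
      have h3 := ged_filter_left d nul p (a :: xs) ys
      by_cases hp : p a
      · have hf : (a :: xs).filter p = a :: xs.filter p := by
          simp [List.filter_cons, hp]
        have hf' : ((a :: xs).filter fun a => !p a) = xs.filter fun a => !p a := by
          simp [List.filter_cons, hp]
        rw [hf, hf'] at h3 ⊢
        simp only [ged]
        exact min3_le (by linarith) (by linarith) (by linarith)
      · have hf : (a :: xs).filter p = xs.filter p := by
          simp [List.filter_cons, hp]
        have hf' : ((a :: xs).filter fun a => !p a) = a :: xs.filter fun a => !p a := by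
          simp [List.filter_cons, hp]
        rw [hf, hf', List.map_cons, List.sum_cons]
        calc ged d nul (a :: xs) (b :: ys)
            ≤ d nul a + ged d nul xs (b :: ys) := by
              simp only [ged]
              exact (min_le_right _ _).trans (min_le_left _ _)
          _ ≤ _ := by linarith
  termination_by x y => x.length + y.length

private lemma delCost_le [MetricSpace α] (nul : α) (r : ℝ) (hr : 0 ≤ r) (x : List α) :
    ((x.filter fun a => !decide (r < dist nul a)).map (dist nul)).sum ≤ r * x.length := by
  have h1 : ∀ t ∈ (x.filter fun a => !decide (r < dist nul a)).map (dist nul), t ≤ r := by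
    intro t ht
    simp only [List.mem_map, List.mem_filter, Bool.not_eq_true', decide_eq_false_iff_not,
      not_lt] at ht
    obtain ⟨a, ⟨_, ha⟩, rfl⟩ := ht
    exact ha
  have h2 := List.sum_le_card_nsmul _ r h1
  rw [nsmul_eq_mul] at h2
  have h3 : ((x.filter fun a => !decide (r < dist nul a)).map (dist nul)).length ≤ x.length := by
    simpa using List.length_filter_le _ x
  have h4 : (((x.filter fun a => !decide (r < dist nul a)).map (dist nul)).length : ℝ)
      ≤ (x.length : ℝ) := by exact_mod_cast h3
  nlinarith

/-- `ed(x, y) < ed(s_r(x), s_r(y)) + 4rn`; in particular if `r ≤ 2R` then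
`ed(x, y) ≤ ed(s_r(x), s_r(y)) + 4Rn`, so `ed(x, y) > 5nR` implies
`ed(s_r(x), s_r(y)) > nR`. -/
theorem stmt12 [MetricSpace α] (nul : α) (r : ℝ) (hr : 1 ≤ r) (n : ℕ) (hn : 0 < n)
    (x y : List α) (hx : x.length = n) (hy : y.length = n) :
    ged dist nul x y < ged dist nul (sEd nul r x) (sEd nul r y) + 4 * r * n ∧
    ∀ R : ℝ, r ≤ 2 * R →
      ged dist nul x y ≤ ged dist nul (sEd nul r x) (sEd nul r y) + 4 * R * n ∧
      (5 * n * R < ged dist nul x y →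
        n * R < ged dist nul (sEd nul r x) (sEd nul r y)) := by
  set p : α → Bool := fun l => decide (r < dist nul l) with hp
  have hr0 : (0 : ℝ) ≤ r := by linarith
  have hsx : sEd nul r x = x.filter p := rfl
  have hsy : sEd nul r y = y.filter p := rfl
  have Dx := delCost_le nul r hr0 x
  have Dy := delCost_le nul r hr0 y
  have A := ged_filter_left dist nul p x (sEd nul r y)
  have B := ged_filter_left dist nul p y (sEd nul r x)
  have hsymm := ged_symm (dist : α → α → ℝ) nul (fun a b => dist_comm a b)
  have B' : ged dist nul (sEd nul r x) y ≤
      ged dist nul (sEd nul r x) (sEd nul r y) +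
        ((y.filter fun a => !p a).map (dist nul)).sum := by
    rw [hsymm (sEd nul r x) y, hsymm (sEd nul r x) (sEd nul r y)]
    simpa [hsy] using B
  have A' : ged dist nul x y ≤ ged dist nul (sEd nul r x) y +
      ((x.filter fun a => !p a).map (dist nul)).sum := by
    have Ay := ged_filter_left dist nul p x y
    simpa [hsx] using Ay
  have key : ged dist nul x y ≤ ged dist nul (sEd nul r x) (sEd nul r y) + 2 * r * n := by
    have := A'.trans (by linarith : ged dist nul (sEd nul r x) y +
      ((x.filter fun a => !p a).map (dist nul)).sum ≤
      ged dist nul (sEd nul r x) (sEd nul r y) +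
        ((y.filter fun a => !p a).map (dist nul)).sum +
        ((x.filter fun a => !p a).map (dist nul)).sum)
    rw [hx] at Dx; rw [hy] at Dy
    calc ged dist nul x y ≤ _ := this
      _ ≤ ged dist nul (sEd nul r x) (sEd nul r y) + 2 * r * n := by linarith
  have hn' : (0 : ℝ) < n := by exact_mod_cast hn
  constructor
  · nlinarith
  · intro R hR
    have h4 : ged dist nul x y ≤ ged dist nul (sEd nul r x) (sEd nul r y) + 4 * R * n := by
      nlinarith
    exact ⟨h4, fun h5 => by nlinarith⟩
end

section
/- Over a metric (Σ ∪ {∅}, d) with |l| = d(∅, l), the expected cost of simulating a single substitution of l₁ by l₂ (with |l₁| < |l₂|) after r-simplification, where r is uniform in [R, 2R], is at most Pr[|l₁| ≤ r < |l₂|]·|l₂| + d(l₁, l₂), which is bounded by 5·d(l₁, l₂). Specifically: if |l₂| ≤ 4R then Pr[|l₁| ≤ r < |l₂|]·|l₂| ≤ 4·d(l₁,l₂), and if |l₂| > 4R then |l₂| ≤ 2·d(l₁, l₂) whenever Pr[|l₁| ≤ r < |l₂|] > 0. -/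
open scoped BigOperators

variable {α : Type*}

/-- The expected cost of simulating a substitution of `l₁` by `l₂` after
`r`-simplification (`r` uniform in `[R, 2R]`) is at most
`Pr[|l₁| ≤ r < |l₂|] · |l₂| + d(l₁, l₂) ≤ 5 · d(l₁, l₂)`. -/
theorem stmt14 [MetricSpace α] (nul l₁ l₂ : α) (R : ℝ) (hR : 1 ≤ R)
    (h12 : dist nul l₁ < dist nul l₂) (P : ℝ)
    (hP : P = (MeasureTheory.volume
        ({r : ℝ | dist nul l₁ ≤ r ∧ r < dist nul l₂} ∩ Set.Icc R (2 * R))).toReal / R) :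
    (dist nul l₂ ≤ 4 * R → P * dist nul l₂ ≤ 4 * dist l₁ l₂) ∧
    (4 * R < dist nul l₂ → 0 < P → dist nul l₂ ≤ 2 * dist l₁ l₂) ∧
    P * dist nul l₂ + dist l₁ l₂ ≤ 5 * dist l₁ l₂ := by
  set a := dist nul l₁ with ha
  set b := dist nul l₂ with hb
  set D := dist l₁ l₂ with hD
  have hR0 : (0:ℝ) < R := lt_of_lt_of_le one_pos hR
  have hab : b - a ≤ D := by
    have h := abs_dist_sub_le l₁ l₂ nul
    rw [dist_comm l₁ nul, dist_comm l₂ nul] at h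
    have := abs_le.mp h
    simp only [← ha, ← hb, ← hD] at this ⊢
    linarith [this.1]
  have hD0 : 0 ≤ D := dist_nonneg
  have hb0 : 0 ≤ b := dist_nonneg
  set S : Set ℝ := {r : ℝ | a ≤ r ∧ r < b} ∩ Set.Icc R (2 * R) with hS
  have hsub1 : S ⊆ Set.Ico a b := fun r hr => hr.1
  have hsub2 : S ⊆ Set.Icc R (2 * R) := fun r hr => hr.2
  have hm1 : (MeasureTheory.volume S).toReal ≤ b - a := by
    have hle : MeasureTheory.volume S ≤ ENNReal.ofReal (b - a) := by
      calc MeasureTheory.volume S ≤ MeasureTheory.volume (Set.Ico a b) :=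
            MeasureTheory.measure_mono hsub1
        _ = ENNReal.ofReal (b - a) := Real.volume_Ico
    exact ENNReal.toReal_le_of_le_ofReal (by linarith) hle
  have hm2 : (MeasureTheory.volume S).toReal ≤ R := by
    have hle : MeasureTheory.volume S ≤ ENNReal.ofReal R := by
      calc MeasureTheory.volume S ≤ MeasureTheory.volume (Set.Icc R (2*R)) :=
            MeasureTheory.measure_mono hsub2
        _ = ENNReal.ofReal (2*R - R) := Real.volume_Icc
        _ = ENNReal.ofReal R := by ring_nf
    exact ENNReal.toReal_le_of_le_ofReal (le_of_lt hR0) hle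
  have hm0 : 0 ≤ (MeasureTheory.volume S).toReal := ENNReal.toReal_nonneg
  have hP0 : 0 ≤ P := by rw [hP]; positivity
  have hPD : P * R ≤ D := by
    rw [hP, div_mul_cancel₀ _ (ne_of_gt hR0)]
    exact le_trans hm1 hab
  have hP1 : P ≤ 1 := by
    rw [hP, div_le_one hR0]; exact hm2
  have key2 : 4 * R < b → 0 < P → b ≤ 2 * D := by
    intro hb4 hPpos
    -- S is nonempty
    have hvol : MeasureTheory.volume S ≠ 0 := by
      intro h
      rw [hP, h] at hPpos
      simp at hPpos
    have hne : S.Nonempty := MeasureTheory.nonempty_of_measure_ne_zero hvol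
    obtain ⟨r, hr⟩ := hne
    have ha2R : a ≤ 2 * R := le_trans hr.1.1 hr.2.2
    have : b - a ≥ b - 2*R := by linarith
    have hbhalf : b / 2 ≤ b - a := by linarith
    linarith
  have key1 : b ≤ 4 * R → P * b ≤ 4 * D := by
    intro hb4
    calc P * b ≤ P * (4 * R) := by
          apply mul_le_mul_of_nonneg_left hb4 hP0
      _ = 4 * (P * R) := by ring
      _ ≤ 4 * D := by linarith
  refine ⟨key1, key2, ?_⟩
  rcases le_or_gt b (4 * R) with h | h
  · have := key1 h; linarith
  · rcases eq_or_lt_of_le hP0 with hPz | hPpos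
    · rw [← hPz]; linarith
    · have hb2 := key2 h hPpos
      have : P * b ≤ 1 * b := mul_le_mul_of_nonneg_right hP1 hb0
      nlinarith
end
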